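/- For n ≥ 3, if the generalized n-qubit W state has all weights a_i < 1/2 and some a_i ≠ 1/n, then its indicator η(|W_n⟩) = 4 a_min E − 2E differs from the indicator η(|GHZ_n⟩) = −2(n−2)E/n of the GHZ state with sin²θ = 1/n, distinguishing the two states. -/
import Mathlib


/-- for `n ≥ 3`, if the generalized `n`-qubit W state has all weights
`a_i < 1/2` and some `a_i ≠ 1/n`, then its indicator
`η(|W_n⟩) = (4 a_min - 2) E` differs from the indicator
`η(|GHZ_n⟩) = -2(n-2)E/n` of the GHZ state with `sin²θ = 1/n`. -/
theorem w_vs_ghz_indicator (n : ℕ) (hn : 3 ≤ n) (E : ℝ) (hE : 0 < E)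
    (a : Fin n → ℝ) (ha0 : ∀ i, 0 ≤ a i) (hsum : ∑ i, a i = 1)
    (hhalf : ∀ i, a i < 1 / 2) (hne : ∃ i, a i ≠ 1 / (n : ℝ))
    (hnonempty : (Finset.univ : Finset (Fin n)).Nonempty)
    (ηW ηG : ℝ)
    (hηW : ηW = Finset.univ.inf' hnonempty fun j =>
      2 * a j * E - ∑ k ∈ Finset.univ.erase j, 2 * a k * E)
    (hηG : ηG = -2 * ((n : ℝ) - 2) * E / n) :
    ηW = (4 * Finset.univ.inf' hnonempty a - 2) * E ∧ ηW ≠ ηG := by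
  have hfun : ∀ j : Fin n, (2 * a j * E - ∑ k ∈ Finset.univ.erase j, 2 * a k * E)
      = (4 * a j - 2) * E := by
    intro j
    have herase : (∑ k ∈ Finset.univ.erase j, 2 * a k * E)
        = (∑ k, 2 * a k * E) - 2 * a j * E :=
      Finset.sum_erase_eq_sub (Finset.mem_univ j)
    have hall : (∑ k, 2 * a k * E) = 2 * E := by
      have : (∑ k, 2 * a k * E) = 2 * E * ∑ k, a k := by
        rw [Finset.mul_sum]; apply Finset.sum_congr rfl; intros; ring
      rw [this, hsum]; ring
    rw [herase, hall]; ring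
  -- minimum of a
  obtain ⟨i, hi, hieq⟩ := Finset.exists_mem_eq_inf' hnonempty a
  have hmin : ∀ j : Fin n, a i ≤ a j := fun j =>
    hieq ▸ Finset.inf'_le a (Finset.mem_univ j)
  have hinf : (Finset.univ.inf' hnonempty fun j =>
      2 * a j * E - ∑ k ∈ Finset.univ.erase j, 2 * a k * E) = (4 * a i - 2) * E := by
    apply le_antisymm
    · calc _ ≤ 2 * a i * E - ∑ k ∈ Finset.univ.erase i, 2 * a k * E :=
            Finset.inf'_le _ (Finset.mem_univ i)
        _ = (4 * a i - 2) * E := hfun i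
    · apply Finset.le_inf'
      intro j _
      rw [hfun j]
      have := hmin j
      nlinarith
  have hW : ηW = (4 * a i - 2) * E := by rw [hηW, hinf]
  constructor
  · rw [hW, hieq]
  · -- a i < 1/n
    have hn0 : (0:ℝ) < (n:ℝ) := by positivity
    have hilt : a i < 1 / (n : ℝ) := by
      by_contra h
      push_neg at h
      obtain ⟨k, hk⟩ := hne
      have hk' : 1 / (n:ℝ) < a k := lt_of_le_of_ne (le_trans h (hmin k)) (Ne.symm hk)
      have hlt : (∑ j : Fin n, 1 / (n:ℝ)) < ∑ j, a j :=
        Finset.sum_lt_sum (fun j _ => le_trans h (hmin j)) ⟨k, Finset.mem_univ k, hk'⟩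
      rw [hsum, Finset.sum_const, Finset.card_univ, Fintype.card_fin, nsmul_eq_mul] at hlt
      rw [mul_one_div, div_self (ne_of_gt hn0)] at hlt
      exact lt_irrefl _ hlt
    rw [hW, hηG]
    have hG : -2 * ((n : ℝ) - 2) * E / n = (4 * (1/(n:ℝ)) - 2) * E := by
      field_simp; ring
    rw [hG]
    have : (4 * a i - 2) * E < (4 * (1/(n:ℝ)) - 2) * E := by nlinarith
    exact ne_of_lt this
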